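/- arXiv:0907.4200 — 4 statements merged into one kernel-verified Lean document; each statement's English description precedes it below -/
import Mathlib

section
/- Let p : ℤ^d → [0,∞) be finitely supported with Σ_x p(x) = 1 and p(−x) = p(x) for all x, and suppose the set {x : p(x) ≠ 0} contains a linear basis of ℝ^d. Then the (real-valued) Fourier transform p̂(θ) = Σ_x p(x) cos(x·θ) satisfies −1 ≤ p̂(θ) ≤ 1 for all θ ∈ [−π,π]^d, and there exist constants c₁, c₂, c₃ > 0 such that 0 ≤ 1 − c₁|θ|² ≤ p̂(θ) ≤ 1 − c₂|θ|² whenever |θ| ≤ c₃ (|θ| denoting the Euclidean norm of θ ∈ ℝ^d). -/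
open scoped Real

/-!
Writing `φ x = x · θ`, one has `1 - p̂(θ) = Σ_x p(x) (1 - cos φ x)`, and the elementary bounds
`(2/π²) t² ≤ 1 - cos t ≤ t²/2` (the first for `|t| ≤ π`) squeeze `1 - p̂(θ)` between multiples
of the quadratic form `Σ_x p(x) (x · θ)²`. By Cauchy–Schwarz this form is at most `R |θ|²`, with
`R` bounding `|x|²` on the finite support. It is at least `m Σ_i (v_i · θ)²`, where `m` is the
smallest weight of the basis vectors `v_i`, and the latter is `≥ c |θ|²` because `θ ↦ (v_i · θ)_i`
is an injective linear map of a finite-dimensional space, hence antilipschitz.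
-/

theorem Matrix.exists_pos_mul_sum_sq_le_sum_sq_mulVec {m n : Type*} [Fintype m] [Fintype n]
    [DecidableEq n] {A : Matrix m n ℝ} (hA : Function.Injective A.mulVec) :
    ∃ c > 0, ∀ θ : n → ℝ, c * ∑ j, θ j ^ 2 ≤ ∑ i, A.mulVec θ i ^ 2 := by
  have hker : (Matrix.toLpLin 2 2 A).ker = ⊥ :=
    LinearMap.ker_eq_bot.2 fun x y h =>
      WithLp.ofLp_injective 2 (hA (by simpa using congrArg WithLp.ofLp h))
  obtain ⟨K, hK, hanti⟩ := (Matrix.toLpLin 2 2 A).exists_antilipschitzWith hker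
  refine ⟨((K : ℝ) ^ 2)⁻¹, by positivity, fun θ => ?_⟩
  have hbound := ZeroHomClass.bound_of_antilipschitz _ hanti (WithLp.toLp 2 θ)
  rw [Matrix.toLpLin_toLp] at hbound
  have hbound_sq := pow_le_pow_left₀ (norm_nonneg _) hbound 2
  rw [mul_pow, EuclideanSpace.real_norm_sq_eq, EuclideanSpace.real_norm_sq_eq] at hbound_sq
  rw [inv_mul_le_iff₀ (by positivity)]
  simpa using hbound_sq

lemma Set.Finite.exists_pos_forall_le {α : Type*} {s : Set α} (hs : s.Finite) (g : α → ℝ) :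
    ∃ R > 0, ∀ x ∈ s, g x ≤ R := by
  obtain ⟨R, hR⟩ := (hs.image g).bddAbove
  exact ⟨max R 1, by positivity, fun x hx => (hR ⟨x, hx, rfl⟩).trans (le_max_left _ _)⟩

section WeightedAverage

variable {α : Type*} {p : α → ℝ}

lemma summable_mul_of_support_finite (hp : p.support.Finite) (g : α → ℝ) :
    Summable fun x => p x * g x :=
  summable_of_hasFiniteSupport (hp.subset (Function.support_mul_subset_left _ _))

lemma tsum_mul_le_of_forall_le (hp0 : ∀ x, 0 ≤ p x) (hp : p.support.Finite)
    (hp1 : ∑' x, p x = 1) {g : α → ℝ} {b : ℝ} (hg : ∀ x, p x ≠ 0 → g x ≤ b) :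
    ∑' x, p x * g x ≤ b := by
  have hterm : ∀ x, p x * g x ≤ p x * b := fun x => by
    by_cases hx : p x = 0
    · simp [hx]
    · exact mul_le_mul_of_nonneg_left (hg x hx) (hp0 x)
  calc ∑' x, p x * g x ≤ ∑' x, p x * b :=
        Summable.tsum_le_tsum hterm (summable_mul_of_support_finite hp g)
          (summable_mul_of_support_finite hp _)
    _ = b := by rw [tsum_mul_right, hp1, one_mul]

lemma le_tsum_mul_of_forall_le (hp0 : ∀ x, 0 ≤ p x) (hp : p.support.Finite)
    (hp1 : ∑' x, p x = 1) {g : α → ℝ} {b : ℝ} (hg : ∀ x, p x ≠ 0 → b ≤ g x) :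
    b ≤ ∑' x, p x * g x := by
  have := tsum_mul_le_of_forall_le hp0 hp hp1 (g := fun x => -g x) (b := -b)
    fun x hx => neg_le_neg (hg x hx)
  simpa only [mul_neg, tsum_neg, neg_le_neg_iff] using this

lemma one_sub_tsum_mul_cos_eq (hp : p.support.Finite) (hp1 : ∑' x, p x = 1) (φ : α → ℝ) :
    1 - ∑' x, p x * Real.cos (φ x) = ∑' x, p x * (1 - Real.cos (φ x)) := by
  simp_rw [mul_one_sub]
  rw [Summable.tsum_sub (summable_of_hasFiniteSupport hp) (summable_mul_of_support_finite hp _),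
    hp1]

lemma one_sub_tsum_mul_cos_le (hp0 : ∀ x, 0 ≤ p x) (hp : p.support.Finite)
    (hp1 : ∑' x, p x = 1) (φ : α → ℝ) :
    1 - ∑' x, p x * Real.cos (φ x) ≤ (∑' x, p x * φ x ^ 2) / 2 := by
  rw [one_sub_tsum_mul_cos_eq hp hp1, ← tsum_div_const]
  refine Summable.tsum_le_tsum (fun x => ?_) (summable_mul_of_support_finite hp _)
    ((summable_mul_of_support_finite hp _).div_const 2)
  rw [mul_div_assoc]
  exact mul_le_mul_of_nonneg_left (by linarith [Real.one_sub_sq_div_two_le_cos (x := φ x)])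
    (hp0 x)

lemma le_one_sub_tsum_mul_cos (hp0 : ∀ x, 0 ≤ p x) (hp : p.support.Finite)
    (hp1 : ∑' x, p x = 1) {φ : α → ℝ} (hφ : ∀ x, p x ≠ 0 → |φ x| ≤ π) :
    2 / π ^ 2 * ∑' x, p x * φ x ^ 2 ≤ 1 - ∑' x, p x * Real.cos (φ x) := by
  rw [one_sub_tsum_mul_cos_eq hp hp1, ← tsum_mul_left]
  refine Summable.tsum_le_tsum (fun x => ?_) ((summable_mul_of_support_finite hp _).mul_left _)
    (summable_mul_of_support_finite hp _)
  by_cases hx : p x = 0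
  · simp [hx]
  have hcos := Real.cos_le_one_sub_mul_cos_sq (hφ x hx)
  calc 2 / π ^ 2 * (p x * φ x ^ 2) = p x * (2 / π ^ 2 * φ x ^ 2) := by ring
    _ ≤ p x * (1 - Real.cos (φ x)) := mul_le_mul_of_nonneg_left (by linarith) (hp0 x)

end WeightedAverage

lemma exists_pos_mul_sum_sq_le_tsum_mul_dot_sq {ι : Type*} [Fintype ι] [DecidableEq ι]
    {p : (ι → ℤ) → ℝ} (hp0 : ∀ x, 0 ≤ p x) (hp : p.support.Finite) {v : ι → ι → ℤ}
    (hv : ∀ i, p (v i) ≠ 0) (hli : LinearIndependent ℝ fun i j => (v i j : ℝ)) :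
    ∃ c > 0, ∀ θ : ι → ℝ, c * ∑ i, θ i ^ 2 ≤ ∑' x, p x * (∑ i, (x i : ℝ) * θ i) ^ 2 := by
  obtain ⟨m, hm, hmv⟩ : ∃ m > 0, ∀ i, m ≤ p (v i) := by
    rcases isEmpty_or_nonempty ι with hι | hι
    · exact ⟨1, one_pos, fun i => isEmptyElim i⟩
    obtain ⟨i₀, -, hi₀⟩ := Finset.univ.exists_min_image (p ∘ v) Finset.univ_nonempty
    exact ⟨p (v i₀), (hp0 _).lt_of_ne' (hv i₀), fun i => hi₀ i (Finset.mem_univ i)⟩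
  obtain ⟨c, hc, hA⟩ := Matrix.exists_pos_mul_sum_sq_le_sum_sq_mulVec
    (Matrix.mulVec_injective_iff_isUnit.2 (Matrix.linearIndependent_rows_iff_isUnit.1 hli))
  refine ⟨m * c, by positivity, fun θ => ?_⟩
  calc m * c * ∑ i, θ i ^ 2 ≤ m * ∑ i, (∑ j, (v i j : ℝ) * θ j) ^ 2 := by
        rw [mul_assoc]; exact mul_le_mul_of_nonneg_left (hA θ) hm.le
    _ ≤ ∑ i, p (v i) * (∑ j, (v i j : ℝ) * θ j) ^ 2 := by
        rw [Finset.mul_sum]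
        exact Finset.sum_le_sum fun i _ => mul_le_mul_of_nonneg_right (hmv i) (sq_nonneg _)
    _ = ∑' i, p (v i) * (∑ j, (v i j : ℝ) * θ j) ^ 2 := (tsum_fintype _).symm
    _ ≤ ∑' x, p x * (∑ i, (x i : ℝ) * θ i) ^ 2 :=
        Summable.tsum_le_tsum_of_inj v
          (Function.Injective.of_comp (f := fun x j => (x j : ℝ)) hli.injective)
          (fun x _ => mul_nonneg (hp0 x) (sq_nonneg _)) (fun i => le_rfl) (Summable.of_finite)
          (summable_mul_of_support_finite hp _)

theorem stmt8_general {d : ℕ} (p : (Fin d → ℤ) → ℝ)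
    (hsupp : (Function.support p).Finite)
    (hp0 : ∀ x, 0 ≤ p x) (hp1 : ∑' x, p x = 1)
    (hbasis : ∃ v : Fin d → (Fin d → ℤ), (∀ i, p (v i) ≠ 0) ∧
      LinearIndependent ℝ fun i => fun j => ((v i j : ℝ))) :
    (∀ θ ∈ Set.univ.pi fun _ : Fin d => Set.Icc (-π) π,
      -1 ≤ ∑' x, p x * Real.cos (∑ i, (x i : ℝ) * θ i) ∧
        ∑' x, p x * Real.cos (∑ i, (x i : ℝ) * θ i) ≤ 1) ∧
    ∃ c₁ > (0 : ℝ), ∃ c₂ > (0 : ℝ), ∃ c₃ > (0 : ℝ), ∀ θ : Fin d → ℝ,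
      Real.sqrt (∑ i, (θ i) ^ 2) ≤ c₃ →
        0 ≤ 1 - c₁ * (∑ i, (θ i) ^ 2) ∧
        1 - c₁ * (∑ i, (θ i) ^ 2) ≤ ∑' x, p x * Real.cos (∑ i, (x i : ℝ) * θ i) ∧
        ∑' x, p x * Real.cos (∑ i, (x i : ℝ) * θ i) ≤ 1 - c₂ * (∑ i, (θ i) ^ 2) := by
  refine ⟨fun θ _ => ⟨le_tsum_mul_of_forall_le hp0 hsupp hp1 fun x _ => Real.neg_one_le_cos _,
    tsum_mul_le_of_forall_le hp0 hsupp hp1 fun x _ => Real.cos_le_one _⟩, ?_⟩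
  obtain ⟨v, hv, hli⟩ := hbasis
  obtain ⟨c, hc, hcoer⟩ := exists_pos_mul_sum_sq_le_tsum_mul_dot_sq hp0 hsupp hv hli
  obtain ⟨R, hR, hRx⟩ := hsupp.exists_pos_forall_le fun x => ∑ i, (x i : ℝ) ^ 2
  refine ⟨R, hR, 2 / π ^ 2 * c, by positivity, √R⁻¹, by positivity, fun θ hθ => ?_⟩
  set N := ∑ i, θ i ^ 2
  have hN : 0 ≤ N := by positivity
  have hRN0 : 0 ≤ R * N := by positivity
  have hRN : R * N ≤ 1 := by
    rw [Real.sqrt_le_left (by positivity), Real.sq_sqrt (by positivity)] at hθ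
    exact (mul_le_mul_of_nonneg_left hθ hR.le).trans_eq (mul_inv_cancel₀ hR.ne')
  have hdot : ∀ x, p x ≠ 0 → (∑ i, (x i : ℝ) * θ i) ^ 2 ≤ R * N := fun x hx =>
    (Finset.sum_mul_sq_le_sq_mul_sq _ _ _).trans (mul_le_mul_of_nonneg_right (hRx x hx) hN)
  have hπ : ∀ x, p x ≠ 0 → |∑ i, (x i : ℝ) * θ i| ≤ π := fun x hx =>
    ((sq_le_one_iff_abs_le_one _).1 ((hdot x hx).trans hRN)).trans
      (by linarith [Real.pi_gt_three])
  have hvar := tsum_mul_le_of_forall_le hp0 hsupp hp1 hdot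
  have hupper := one_sub_tsum_mul_cos_le hp0 hsupp hp1 fun x => ∑ i, (x i : ℝ) * θ i
  have hlower := le_one_sub_tsum_mul_cos hp0 hsupp hp1 hπ
  have hcN := mul_le_mul_of_nonneg_left (hcoer θ) (by positivity : (0 : ℝ) ≤ 2 / π ^ 2)
  exact ⟨by linarith, by linarith, by linarith⟩

/-- For a finitely supported symmetric probability function `p` on `ℤ^d` whose support
contains a linear basis of `ℝ^d`, the Fourier transform `p̂(θ) = Σ_x p(x) cos(x·θ)`
satisfies `−1 ≤ p̂(θ) ≤ 1` on `[−π,π]^d`, and there are constants `c₁, c₂, c₃ > 0` with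
`0 ≤ 1 − c₁|θ|² ≤ p̂(θ) ≤ 1 − c₂|θ|²` for `|θ| ≤ c₃` (Euclidean norm). -/
theorem stmt8 {d : ℕ} (p : (Fin d → ℤ) → ℝ)
    (hsupp : (Function.support p).Finite)
    (hp0 : ∀ x, 0 ≤ p x) (hp1 : ∑' x, p x = 1)
    (hsym : ∀ x, p (-x) = p x)
    (hbasis : ∃ v : Fin d → (Fin d → ℤ), (∀ i, p (v i) ≠ 0) ∧
      LinearIndependent ℝ fun i => fun j => ((v i j : ℝ))) :
    (∀ θ ∈ Set.univ.pi fun _ : Fin d => Set.Icc (-π) π,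
      -1 ≤ ∑' x, p x * Real.cos (∑ i, (x i : ℝ) * θ i) ∧
        ∑' x, p x * Real.cos (∑ i, (x i : ℝ) * θ i) ≤ 1) ∧
    ∃ c₁ > (0 : ℝ), ∃ c₂ > (0 : ℝ), ∃ c₃ > (0 : ℝ), ∀ θ : Fin d → ℝ,
      Real.sqrt (∑ i, (θ i) ^ 2) ≤ c₃ →
        0 ≤ 1 - c₁ * (∑ i, (θ i) ^ 2) ∧
        1 - c₁ * (∑ i, (θ i) ^ 2) ≤ ∑' x, p x * Real.cos (∑ i, (x i : ℝ) * θ i) ∧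
        ∑' x, p x * Real.cos (∑ i, (x i : ℝ) * θ i) ≤ 1 - c₂ * (∑ i, (θ i) ^ 2) :=
  stmt8_general p hsupp hp0 hp1 hbasis
end

section
/- Let f, h : ℤ^d → ℝ be summable and let ρ be a probability vector on ℤ^d with replica overlap R = Σ_x ρ_x². Then | Σ_{x∈ℤ^d} (f*ρ)(x) · (h*ρ²)(x) | ≤ |f| · |h| · R^{3/2}, where ρ² denotes the pointwise square (ρ²)_x = ρ_x². -/
open scoped BigOperators
set_option maxHeartbeats 1000000


lemma abs_tsum_le_tsum_abs' {ι : Type*} (f : ι → ℝ) (h : Summable fun i => |f i|) :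
    |∑' i, f i| ≤ ∑' i, |f i| := by
  have h2 : Summable fun i => ‖f i‖ := by simpa [Real.norm_eq_abs] using h
  have h3 := norm_tsum_le_tsum_norm h2
  simpa [Real.norm_eq_abs] using h3

/-- For summable `f, h : ℤ^d → ℝ` and a probability vector `ρ` with replica overlap
`R = Σ_x ρ_x²`, one has `|⟨f*ρ, h*ρ²⟩| ≤ |f|·|h|·R^{3/2}`. -/
theorem stmt10 {d : ℕ} (f h ρ : (Fin d → ℤ) → ℝ)
    (hf : Summable fun x => |f x|) (hh : Summable fun x => |h x|)
    (hρ0 : ∀ x, 0 ≤ ρ x) (hρ1 : HasSum ρ 1) :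
    |∑' x, (∑' y, f (x - y) * ρ y) * (∑' y, h (x - y) * (ρ y) ^ 2)| ≤
      (∑' x, |f x|) * (∑' x, |h x|) * (∑' x, (ρ x) ^ 2) ^ (3 / 2 : ℝ) := by
  classical
  set F := ∑' x, |f x| with hF
  set H := ∑' x, |h x| with hHdef
  set R := ∑' x, (ρ x) ^ 2 with hRdef
  have hρs : Summable ρ := hρ1.summable
  have hρle1 : ∀ x, ρ x ≤ 1 := fun x => le_hasSum hρ1 x fun y _ => hρ0 y
  have hρ2s : Summable fun x => (ρ x) ^ 2 :=
    hρs.of_nonneg_of_le (fun x => sq_nonneg _)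
      (fun x => by nlinarith [hρ0 x, hρle1 x])
  have hR0 : 0 ≤ R := tsum_nonneg fun x => sq_nonneg _
  have hρsqrt : ∀ x, ρ x ≤ Real.sqrt R := by
    intro x
    have h1 : (ρ x) ^ 2 ≤ R := Summable.le_tsum hρ2s x fun y _ => sq_nonneg _
    calc ρ x = Real.sqrt ((ρ x) ^ 2) := (Real.sqrt_sq (hρ0 x)).symm
      _ ≤ Real.sqrt R := Real.sqrt_le_sqrt h1
  have hF0 : 0 ≤ F := tsum_nonneg fun x => abs_nonneg _
  have hH0 : 0 ≤ H := tsum_nonneg fun x => abs_nonneg _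
  -- translated summability for f
  have hfx : ∀ x : Fin d → ℤ, Summable fun y => |f (x - y)| := fun x =>
    ((Equiv.subLeft x).summable_iff (f := fun y => |f y|)).2 hf
  have hfxsum : ∀ x : Fin d → ℤ, (∑' y, |f (x - y)|) = F := fun x =>
    (Equiv.subLeft x).tsum_eq fun y => |f y|
  -- summability of the inner convolution sums
  have hAsummand : ∀ x, Summable fun y => f (x - y) * ρ y := by
    intro x
    apply Summable.of_abs
    refine (hfx x).of_nonneg_of_le (fun y => abs_nonneg _) fun y => ?_
    rw [abs_mul, abs_of_nonneg (hρ0 y)]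
    exact mul_le_of_le_one_right (abs_nonneg _) (hρle1 y)
  -- pointwise bound on f*ρ
  have hAbound : ∀ x, |∑' y, f (x - y) * ρ y| ≤ F * Real.sqrt R := by
    intro x
    have h1 : |∑' y, f (x - y) * ρ y| ≤ ∑' y, |f (x - y) * ρ y| := by
      exact abs_tsum_le_tsum_abs' _ (hAsummand x).abs
    have h2 : (∑' y, |f (x - y) * ρ y|) ≤ ∑' y, |f (x - y)| * Real.sqrt R := by
      refine Summable.tsum_le_tsum (fun y => ?_) (hAsummand x).abs ((hfx x).mul_right _)
      rw [abs_mul, abs_of_nonneg (hρ0 y)]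
      exact mul_le_mul_of_nonneg_left (hρsqrt y) (abs_nonneg _)
    have h3 : (∑' y, |f (x - y)| * Real.sqrt R) = F * Real.sqrt R := by
      rw [tsum_mul_right, hfxsum x]
    linarith
  -- the two-variable kernel for h
  set g : ((Fin d → ℤ) × (Fin d → ℤ)) → ℝ :=
    fun p => |h (p.1 - p.2)| * (ρ p.2) ^ 2 with hgdef
  have hg0 : ∀ p, 0 ≤ g p := fun p => mul_nonneg (abs_nonneg _) (sq_nonneg _)
  -- an equivalence untwisting the convolution
  let e : ((Fin d → ℤ) × (Fin d → ℤ)) ≃ ((Fin d → ℤ) × (Fin d → ℤ)) :=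
    { toFun := fun p => (p.1 + p.2, p.2)
      invFun := fun p => (p.1 - p.2, p.2)
      left_inv := fun p => by simp
      right_inv := fun p => by simp }
  have hprod : Summable fun p : ((Fin d → ℤ) × (Fin d → ℤ)) => |h p.1| * (ρ p.2) ^ 2 :=
    hh.mul_of_nonneg hρ2s (fun x => abs_nonneg _) (fun x => sq_nonneg _)
  have hge : ∀ p : ((Fin d → ℤ) × (Fin d → ℤ)), g (e p) = |h p.1| * (ρ p.2) ^ 2 := by
    intro p; simp [hgdef, e]
  have hgs : Summable g := by
    refine (Equiv.summable_iff e).1 ?_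
    refine hprod.congr fun p => (hge p).symm
  have hgslice : ∀ x, Summable fun y => g (x, y) := fun x => hgs.prod_factor x
  have hgb : HasSum (fun x => ∑' y, g (x, y)) (∑' p, g p) :=
    HasSum.prod_fiberwise hgs.hasSum fun x => (hgslice x).hasSum
  have hgtot : (∑' p, g p) = H * R := by
    have h1 : (∑' p, g p) = ∑' p : ((Fin d → ℤ) × (Fin d → ℤ)), |h p.1| * (ρ p.2) ^ 2 := by
      rw [← Equiv.tsum_eq e g]
      exact tsum_congr hge
    rw [h1, Summable.tsum_prod' (f := fun p => |h p.1| * (ρ p.2) ^ 2) hprod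
      (fun b => hρ2s.mul_left (|h b|))]
    have h2 : ∀ b : Fin d → ℤ, (∑' c, |h b| * (ρ c) ^ 2) = |h b| * R := fun b =>
      tsum_mul_left
    rw [tsum_congr h2, tsum_mul_right]
  -- pointwise bound on h*ρ²
  have hBsummand : ∀ x, Summable fun y => h (x - y) * (ρ y) ^ 2 := by
    intro x
    apply Summable.of_abs
    refine (hgslice x).congr fun y => ?_
    simp [hgdef, abs_mul, abs_of_nonneg (sq_nonneg (ρ y))]
  have hBbound : ∀ x, |∑' y, h (x - y) * (ρ y) ^ 2| ≤ ∑' y, g (x, y) := by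
    intro x
    have h1 : |∑' y, h (x - y) * (ρ y) ^ 2| ≤ ∑' y, |h (x - y) * (ρ y) ^ 2| := by
      exact abs_tsum_le_tsum_abs' _ (hBsummand x).abs
    have h2 : (∑' y, |h (x - y) * (ρ y) ^ 2|) = ∑' y, g (x, y) := by
      refine tsum_congr fun y => ?_
      simp [hgdef, abs_mul, abs_of_nonneg (sq_nonneg (ρ y))]
    linarith
  -- assemble
  have hABle : ∀ x, |(∑' y, f (x - y) * ρ y) * (∑' y, h (x - y) * (ρ y) ^ 2)|
      ≤ (F * Real.sqrt R) * ∑' y, g (x, y) := by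
    intro x
    rw [abs_mul]
    exact mul_le_mul (hAbound x) (hBbound x) (abs_nonneg _)
      (mul_nonneg hF0 (Real.sqrt_nonneg _))
  have hgbS : Summable fun x => ∑' y, g (x, y) := hgb.summable
  have hABsum : Summable fun x =>
      (∑' y, f (x - y) * ρ y) * (∑' y, h (x - y) * (ρ y) ^ 2) := by
    apply Summable.of_abs
    exact (hgbS.mul_left (F * Real.sqrt R)).of_nonneg_of_le
      (fun x => abs_nonneg _) hABle
  have hRpow : R ^ (3 / 2 : ℝ) = R * Real.sqrt R := by
    have h1 : R ^ (3 / 2 : ℝ) = (Real.sqrt R) ^ (3 : ℕ) := by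
      rw [Real.sqrt_eq_rpow, ← Real.rpow_natCast (R ^ ((1 : ℝ)/2)) 3,
        ← Real.rpow_mul hR0]
      norm_num
    rw [h1, pow_succ, Real.sq_sqrt hR0]
  calc |∑' x, (∑' y, f (x - y) * ρ y) * (∑' y, h (x - y) * (ρ y) ^ 2)|
      ≤ ∑' x, |(∑' y, f (x - y) * ρ y) * (∑' y, h (x - y) * (ρ y) ^ 2)| := by
        exact abs_tsum_le_tsum_abs' _ hABsum.abs
    _ ≤ ∑' x, (F * Real.sqrt R) * ∑' y, g (x, y) :=
        Summable.tsum_le_tsum hABle hABsum.abs (hgbS.mul_left _)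
    _ = (F * Real.sqrt R) * ∑' x, ∑' y, g (x, y) := tsum_mul_left
    _ = (F * Real.sqrt R) * (H * R) := by rw [hgb.tsum_eq, hgtot]
    _ = F * H * R ^ (3 / 2 : ℝ) := by rw [hRpow]; ring
end

section
/- Fix n ≥ 1 and let ρ be a probability vector on ℤ^d. For ξ : ℤ^d → [0,∞) with |ξ| = Σ_x ξ_x < ∞ and x, y, z ∈ ℤ^d, set J_{x,z}(ξ) = ρ_x + (ξ−δ₀)_{x−z} ρ_z, U_{x,y,z}(ξ) = J_{x,z}(ξ) J_{y,z}(ξ) − ρ_x ρ_y, and W_{x,y,z}(ξ) = (|ξ|−1) ρ_x ρ_y ρ_z. Then E[ Σ_{x,y,z∈ℤ^d} g_n(x−y) ( U_{x,y,z}(K) − 2 W_{x,y,z}(K) ) ] ≥ ( Σ_{x,y∈ℤ^d} g_n(x−y) β_{x,y} − 2(|k| − k_0) ) · Σ_{z∈ℤ^d} ρ_z². -/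
open MeasureTheory
open scoped BigOperators

/-- `convPow p n` is the `n`-fold convolution power of `p : ℤ^d → ℝ`
(with `convPow p 0 = δ₀`, the Kronecker delta at the origin). -/
noncomputable def convPow {d : ℕ} (p : (Fin d → ℤ) → ℝ) : ℕ → (Fin d → ℤ) → ℝ
  | 0, x => if x = 0 then 1 else 0
  | n + 1, x => ∑' y, convPow p n (x - y) * p y

/-- `gFn p n = δ₀ + Σ_{m=1}^n p_m = Σ_{m=0}^n p_m`. -/
noncomputable def gFn {d : ℕ} (p : (Fin d → ℤ) → ℝ) (n : ℕ) (x : Fin d → ℤ) : ℝ :=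
  ∑ m ∈ Finset.range (n + 1), convPow p m x

/-!
Write `B = K - δ₀`, `h = ρ ⋆ ρ` for the autocorrelation of `ρ` (so `h 0 = Σ ρ_z²`) and
`φ = g_n ⋆ h`. Shifting all three summation variables by `z` turns the triple sum, for every
`ω`, into `2 ⟨B, φ⟩ + h 0 · Σ g_n(x - y) B_x B_y - 2 (|K| - 1) φ 0`. Since `B` lives on a fixed
finite set, the expectation passes inside and replaces `B` by `k - δ₀` and `B_x B_y` by `β`.
As `φ` is even, `⟨k, φ⟩` only sees `k + k(-·) = 2 (|k| - k₀) p + 2 k₀ δ₀`, and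
`g_n ∗ p = g_n - δ₀ + p_{n+1}`; after cancellation the expectation is the claimed lower bound
plus `2 (|k| - k₀) ⟨p_{n+1}, h⟩ ≥ 0`.
-/

open Function

lemma summable_of_abs_le_mul {α β : Type*} {f : α × β → ℝ} {a : α → ℝ} {c : β → ℝ}
    (ha : Summable a) (hc : Summable c) (ha0 : 0 ≤ a) (hc0 : 0 ≤ c)
    (h : ∀ x y, |f (x, y)| ≤ a x * c y) : Summable f :=
  (ha.mul_of_nonneg hc ha0 hc0).of_norm_bounded fun q => h q.1 q.2

lemma hasFiniteSupport_ite_eq_zero {G : Type*} [Zero G] [DecidableEq G] (c : ℝ) :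
    (fun x : G => if x = 0 then c else 0).HasFiniteSupport :=
  (Set.finite_singleton 0).subset fun _ hx => by_contra fun h => hx (if_neg h)

section CrossCorrelation

variable {G : Type*} [AddCommGroup G]

noncomputable def crossCorr (f g : G → ℝ) (v : G) : ℝ := ∑' w, f w * g (w + v)

lemma crossCorr_self_neg (f : G → ℝ) (v : G) : crossCorr f f (-v) = crossCorr f f v := by
  unfold crossCorr
  rw [← (Equiv.addRight v).tsum_eq]
  simp [mul_comm]

lemma crossCorr_neg {f g : G → ℝ} (hf : ∀ x, f (-x) = f x) (hg : ∀ x, g (-x) = g x) (v : G) :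
    crossCorr f g (-v) = crossCorr f g v := by
  unfold crossCorr
  rw [← (Equiv.neg G).tsum_eq]
  refine tsum_congr fun w => ?_
  simp only [Equiv.neg_apply, hf, ← neg_add, hg]

lemma crossCorr_self_nonneg {ρ : G → ℝ} (hρ : 0 ≤ ρ) (v : G) : 0 ≤ crossCorr ρ ρ v :=
  tsum_nonneg fun w => mul_nonneg (hρ w) (hρ (w + v))

lemma crossCorr_self_zero (ρ : G → ℝ) : crossCorr ρ ρ 0 = ∑' z, ρ z ^ 2 := by
  simp [crossCorr, sq]

lemma tsum_mul_crossCorr {f g : G → ℝ} (hf : f.HasFiniteSupport)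
    (hg : g.HasFiniteSupport) (h : G → ℝ) :
    ∑' v, f v * crossCorr g h v = ∑' u, (∑' v, g (u - v) * f v) * h u := by
  let F : G × G → ℝ := fun q => f q.1 * (g q.2 * h (q.2 + q.1))
  have hF : Summable F := summable_of_hasFiniteSupport <| (hf.prod hg).subset fun q hq =>
    ⟨left_ne_zero_of_mul hq, left_ne_zero_of_mul (right_ne_zero_of_mul hq)⟩
  let e : G × G ≃ G × G :=
    { toFun := fun q => (q.2, q.1 - q.2)
      invFun := fun q => (q.2 + q.1, q.1)
      left_inv := fun q => by ext <;> simp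
      right_inv := fun q => by ext <;> simp }
  calc ∑' v, f v * crossCorr g h v = ∑' q, F q := by
        rw [hF.tsum_prod]; simp only [F, crossCorr, tsum_mul_left]
    _ = ∑' q, F (e q) := (e.tsum_eq F).symm
    _ = ∑' u, ∑' v, F (e (u, v)) := (e.summable_iff.mpr hF).tsum_prod
    _ = ∑' u, (∑' v, g (u - v) * f v) * h u := tsum_congr fun u => by
        rw [← tsum_mul_right]
        refine tsum_congr fun v => ?_
        simp only [F, e, Equiv.coe_fn_mk, sub_add_cancel]
        ring

end CrossCorrelation

section SymmetrizedKernel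

variable {G : Type*} [AddCommGroup G] [DecidableEq G] {k : G → ℝ}

noncomputable def symmKernel (k : G → ℝ) (x : G) : ℝ :=
  if x = 0 then 0 else (k x + k (-x)) / (2 * ((∑' y, k y) - k 0))

lemma le_tsum_sub_apply_zero (hk0 : 0 ≤ k) (hk : Summable k) {v : G} (hv : v ≠ 0) :
    k v ≤ (∑' y, k y) - k 0 := by
  have h := hk.sum_le_tsum {v, 0} fun i _ => hk0 i
  rw [Finset.sum_pair hv] at h
  linarith

lemma symmKernel_nonneg (hk0 : 0 ≤ k) (hk : Summable k) : 0 ≤ symmKernel k := by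
  intro x
  rw [symmKernel]
  split_ifs with hx
  · rfl
  · have hD := hk.le_tsum 0 fun j _ => hk0 j
    exact div_nonneg (add_nonneg (hk0 x) (hk0 (-x))) (by linarith)

lemma symmKernel_neg (k : G → ℝ) (x : G) : symmKernel k (-x) = symmKernel k x := by
  simp only [symmKernel, neg_eq_zero, neg_neg, add_comm (k (-x))]

lemma hasFiniteSupport_symmKernel (hk : k.HasFiniteSupport) :
    (symmKernel k).HasFiniteSupport := by
  refine (Set.Finite.union hk (Set.Finite.neg hk)).subset fun x hx => ?_
  by_contra h
  simp only [Set.mem_union, Set.mem_neg, mem_support, not_or, not_not] at h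
  exact hx (by simp [symmKernel, h.1, h.2])

/-- When `∑ k = k 0` the division in `symmKernel k` is by zero (and returns `0`); the identity
still holds because then `k` vanishes off the origin. -/
lemma add_neg_apply_eq_symmKernel (hk0 : 0 ≤ k) (hk : Summable k) (v : G) :
    k v + k (-v) = 2 * ((∑' y, k y) - k 0) * symmKernel k v + if v = 0 then 2 * k 0 else 0 := by
  rcases eq_or_ne v 0 with rfl | hv
  · simp [symmKernel]; ring
  rw [symmKernel, if_neg hv, if_neg hv, add_zero]
  rcases eq_or_ne ((∑' y, k y) - k 0) 0 with hD | hD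
  · have h1 := le_tsum_sub_apply_zero hk0 hk hv
    have h2 := le_tsum_sub_apply_zero hk0 hk (neg_ne_zero.2 hv)
    rw [hD] at h1 h2
    simp [hD, le_antisymm h1 (hk0 v), le_antisymm h2 (hk0 (-v))]
  · field_simp

end SymmetrizedKernel

section TripleSums

variable {G : Type*} [AddCommGroup G] {g B ρ : G → ℝ}

lemma hasSum_linear_term (hg : g.HasFiniteSupport) (hB : B.HasFiniteSupport) (hρ0 : 0 ≤ ρ)
    (hρ1 : HasSum ρ 1) :
    HasSum (fun t : G × G × G => g (t.1 - t.2.1) * (ρ t.1 * (B (t.2.1 - t.2.2) * ρ t.2.2)))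
      (∑' v, B v * crossCorr g (crossCorr ρ ρ) v) := by
  let e : (G × G) × G ≃ G × G × G :=
    { toFun := fun q => (q.2 + (q.1.2 + q.1.1), q.1.1 + q.2, q.2)
      invFun := fun t => ((t.2.1 - t.2.2, t.1 - t.2.1), t.2.2)
      left_inv := fun q => by ext <;> simp [add_sub_add_comm]
      right_inv := fun t => by ext <;> simp }
  let F : (G × G) × G → ℝ := fun q => B q.1.1 * g q.1.2 * (ρ q.2 * ρ (q.2 + (q.1.2 + q.1.1)))
  have hF : Summable F := by
    refine summable_of_abs_le_mul (a := fun q : G × G => |B q.1| * |g q.2|)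
      ((summable_of_hasFiniteSupport hB).abs.mul_of_nonneg (summable_of_hasFiniteSupport hg).abs
        (fun _ => abs_nonneg _) fun _ => abs_nonneg _)
      hρ1.summable (fun _ => by positivity) hρ0 fun q z => ?_
    have hρ_le : ρ (z + (q.2 + q.1)) ≤ 1 := le_hasSum hρ1 _ fun j _ => hρ0 j
    simp only [F, abs_mul, abs_of_nonneg (hρ0 _)]
    gcongr
    exact mul_le_of_le_one_right (hρ0 z) hρ_le
  have hinner : ∀ q : G × G, ∑' z, F (q, z) = B q.1 * g q.2 * crossCorr ρ ρ (q.2 + q.1) :=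
    fun q => by simp only [F, crossCorr, tsum_mul_left]
  have hF' : Summable fun q : G × G => B q.1 * g q.2 * crossCorr ρ ρ (q.2 + q.1) := by
    simpa only [hinner] using hF.prod
  rw [← e.hasSum_iff]
  convert hF.hasSum using 1
  · funext q
    simp only [e, F, comp_apply, Equiv.coe_fn_mk]
    rw [show q.2 + (q.1.2 + q.1.1) - (q.1.1 + q.2) = q.1.2 by abel, add_sub_cancel_right]
    ring
  · calc ∑' v, B v * crossCorr g (crossCorr ρ ρ) v
        = ∑' v, ∑' w, B v * g w * crossCorr ρ ρ (w + v) := by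
          simp_rw [mul_assoc, tsum_mul_left]; rfl
      _ = ∑' q : G × G, ∑' z, F (q, z) := by rw [tsum_congr hinner, hF'.tsum_prod]
      _ = ∑' q, F q := hF.tsum_prod.symm

lemma hasSum_quadratic_term (hB : B.HasFiniteSupport) (hρ0 : 0 ≤ ρ) (hρ1 : HasSum ρ 1) :
    HasSum (fun t : G × G × G =>
        g (t.1 - t.2.1) * (B (t.1 - t.2.2) * B (t.2.1 - t.2.2) * ρ t.2.2 ^ 2))
      ((∑' q : G × G, g (q.1 - q.2) * (B q.1 * B q.2)) * ∑' z, ρ z ^ 2) := by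
  let e : (G × G) × G ≃ G × G × G :=
    { toFun := fun q => (q.1.1 + q.2, q.1.2 + q.2, q.2)
      invFun := fun t => ((t.1 - t.2.2, t.2.1 - t.2.2), t.2.2)
      left_inv := fun q => by ext <;> simp
      right_inv := fun t => by ext <;> simp }
  let A : G × G → ℝ := fun q => g (q.1 - q.2) * (B q.1 * B q.2)
  have hA : Summable A := by
    refine summable_of_hasFiniteSupport ((hB.prod hB).subset fun q hq => ?_)
    have hq : B q.1 * B q.2 ≠ 0 := right_ne_zero_of_mul hq
    exact ⟨left_ne_zero_of_mul hq, right_ne_zero_of_mul hq⟩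
  have hρ2 : Summable fun z => ρ z ^ 2 :=
    hρ1.summable.of_nonneg_of_le (fun z => sq_nonneg _) fun z =>
      pow_le_of_le_one (hρ0 z) (le_hasSum hρ1 z fun j _ => hρ0 j) two_ne_zero
  have hprod : Summable fun q : (G × G) × G => A q.1 * ρ q.2 ^ 2 :=
    summable_of_abs_le_mul hA.abs hρ2 (fun _ => abs_nonneg _) (fun _ => sq_nonneg _) fun q z => by
      rw [abs_mul, abs_sq]
  rw [← e.hasSum_iff]
  refine (hA.hasSum.mul hρ2.hasSum hprod).congr_fun fun q => ?_
  simp only [e, A, comp_apply, Equiv.coe_fn_mk, add_sub_add_right_eq_sub, add_sub_cancel_right]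
  ring

lemma hasSum_cubic_term (hg : g.HasFiniteSupport) (hρ0 : 0 ≤ ρ) (hρ1 : HasSum ρ 1) :
    HasSum (fun t : G × G × G => g (t.1 - t.2.1) * (ρ t.1 * ρ t.2.1 * ρ t.2.2))
      (crossCorr g (crossCorr ρ ρ) 0) := by
  let e : (G × G) × G ≃ G × G × G :=
    { toFun := fun q => (q.1.2 + q.1.1, q.1.2, q.2)
      invFun := fun t => ((t.1 - t.2.1, t.2.1), t.2.2)
      left_inv := fun q => by ext <;> simp
      right_inv := fun t => by ext <;> simp }
  let A : G × G → ℝ := fun q => g q.1 * (ρ q.2 * ρ (q.2 + q.1))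
  have hA : Summable A := by
    refine summable_of_abs_le_mul (summable_of_hasFiniteSupport hg).abs hρ1.summable
      (fun _ => abs_nonneg _) hρ0 fun w y => ?_
    have hρ_le : ρ (y + w) ≤ 1 := le_hasSum hρ1 _ fun j _ => hρ0 j
    simp only [A, abs_mul, abs_of_nonneg (hρ0 _)]
    gcongr
    exact mul_le_of_le_one_right (hρ0 y) hρ_le
  have hA_sum : HasSum A (crossCorr g (crossCorr ρ ρ) 0) := by
    convert hA.hasSum using 1
    rw [hA.tsum_prod]
    simp only [A, crossCorr, add_zero, tsum_mul_left]
  have hprod : Summable fun q : (G × G) × G => A q.1 * ρ q.2 :=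
    summable_of_abs_le_mul hA.abs hρ1.summable (fun _ => abs_nonneg _) hρ0 fun q z => by
      rw [abs_mul, abs_of_nonneg (hρ0 z)]
  rw [← e.hasSum_iff, ← mul_one (crossCorr g _ 0)]
  refine (hA_sum.mul hρ1 hprod).congr_fun fun q => ?_
  simp only [e, A, comp_apply, Equiv.coe_fn_mk, add_sub_cancel_left]
  ring

lemma tsum_triple_eq_crossCorr (hg : g.HasFiniteSupport) (hg_even : ∀ x, g (-x) = g x)
    (hB : B.HasFiniteSupport) (hρ0 : 0 ≤ ρ) (hρ1 : HasSum ρ 1) (c : ℝ) :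
    ∑' t : G × G × G, g (t.1 - t.2.1) *
        (((ρ t.1 + B (t.1 - t.2.2) * ρ t.2.2) * (ρ t.2.1 + B (t.2.1 - t.2.2) * ρ t.2.2) -
            ρ t.1 * ρ t.2.1) - 2 * ((c - 1) * ρ t.1 * ρ t.2.1 * ρ t.2.2)) =
      2 * ∑' v, B v * crossCorr g (crossCorr ρ ρ) v
        + (∑' z, ρ z ^ 2) * ∑' q : G × G, g (q.1 - q.2) * (B q.1 * B q.2)
        - 2 * ((c - 1) * crossCorr g (crossCorr ρ ρ) 0) := by
  have hlin := hasSum_linear_term hg hB hρ0 hρ1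
  let swap : G × G × G ≃ G × G × G :=
    { toFun := fun t => (t.2.1, t.1, t.2.2)
      invFun := fun t => (t.2.1, t.1, t.2.2)
      left_inv := fun _ => rfl
      right_inv := fun _ => rfl }
  have hlin' : HasSum
      (fun t : G × G × G => g (t.1 - t.2.1) * (B (t.1 - t.2.2) * ρ t.2.2 * ρ t.2.1))
      (∑' v, B v * crossCorr g (crossCorr ρ ρ) v) := by
    rw [← swap.hasSum_iff]
    refine hlin.congr_fun fun t => ?_
    simp only [swap, comp_apply, Equiv.coe_fn_mk]
    rw [← neg_sub, hg_even]
    ring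
  have hsum := ((hlin.add hlin').add (hasSum_quadratic_term (g := g) hB hρ0 hρ1)).sub
    ((hasSum_cubic_term hg hρ0 hρ1).mul_left (2 * (c - 1)))
  convert hsum.tsum_eq using 1
  · exact tsum_congr fun t => by ring
  · ring

end TripleSums

section Expectation

variable {Ω ι : Type*} [MeasurableSpace Ω] {P : Measure Ω}

lemma integrable_tsum_and_integral_tsum_of_ae_eq_zero {f : Ω → ι → ℝ} (s : Finset ι)
    (hs : ∀ᵐ ω ∂P, ∀ i ∉ s, f ω i = 0) (hf : ∀ i, Integrable (fun ω => f ω i) P) :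
    Integrable (fun ω => ∑' i, f ω i) P ∧ ∫ ω, ∑' i, f ω i ∂P = ∑' i, ∫ ω, f ω i ∂P := by
  have hae : (fun ω => ∑' i, f ω i) =ᵐ[P] fun ω => ∑ i ∈ s, f ω i :=
    hs.mono fun _ h => tsum_eq_sum h
  refine ⟨(integrable_finsetSum s fun i _ => hf i).congr hae.symm, ?_⟩
  rw [integral_congr_ae hae, integral_finsetSum s fun i _ => hf i,
    tsum_eq_sum fun i hi => integral_eq_zero_of_ae (hs.mono fun _ h => h i hi)]

variable {G : Type*} [AddCommGroup G] [DecidableEq G]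

lemma sub_ite_eq_zero_of_notMem_insert {S : Finset G} {f : G → ℝ} (hf : ∀ x ∉ S, f x = 0)
    {x : G} (hx : x ∉ insert 0 S) : f x - (if x = 0 then 1 else 0) = 0 := by
  rw [Finset.mem_insert, not_or] at hx
  rw [hf x hx.2, if_neg hx.1, sub_zero]

lemma hasFiniteSupport_sub_ite {S : Finset G} {f : G → ℝ} (hf : ∀ x ∉ S, f x = 0) :
    (fun x => f x - if x = 0 then 1 else 0).HasFiniteSupport :=
  (insert 0 S).finite_toSet.subset fun _ hx =>
    by_contra fun hxS => hx (sub_ite_eq_zero_of_notMem_insert hf hxS)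

lemma hasFiniteSupport_integral_of_ae_eq_zero {K : Ω → G → ℝ} {S : Finset G}
    (hKS : ∀ᵐ ω ∂P, ∀ x ∉ S, K ω x = 0) : (fun x => ∫ ω, K ω x ∂P).HasFiniteSupport :=
  S.finite_toSet.subset fun x hx =>
    by_contra fun hxS => hx (integral_eq_zero_of_ae (hKS.mono fun _ h => h x hxS))

lemma integrable_sub_ite_mul_sub_ite [IsFiniteMeasure P] {K : Ω → G → ℝ} {C : ℝ}
    (hK_meas : ∀ x, Measurable fun ω => K ω x) (hK_bdd : ∀ᵐ ω ∂P, ∀ x, |K ω x| ≤ C) (x y : G) :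
    Integrable (fun ω => (K ω x - (if x = 0 then 1 else 0)) * (K ω y - (if y = 0 then 1 else 0)))
      P := by
  refine .of_bound (((hK_meas x).sub_const _).mul ((hK_meas y).sub_const _)).aestronglyMeasurable
    ((C + 1) * (C + 1)) (hK_bdd.mono fun ω h => ?_)
  have hB_le : ∀ z, |K ω z - (if z = 0 then 1 else 0)| ≤ C + 1 := fun z =>
    (abs_sub _ _).trans (add_le_add (h z) (by split_ifs <;> simp))
  rw [Real.norm_eq_abs, abs_mul]
  exact mul_le_mul (hB_le x) (hB_le y) (abs_nonneg _) ((abs_nonneg _).trans (hB_le x))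

lemma integral_quadratic_form [IsProbabilityMeasure P] (K : Ω → G → ℝ) (C : ℝ) (S : Finset G)
    (hK_meas : ∀ x, Measurable fun ω => K ω x) (hK_bdd : ∀ᵐ ω ∂P, ∀ x, |K ω x| ≤ C)
    (hKS : ∀ᵐ ω ∂P, ∀ x ∉ S, K ω x = 0)
    (k : G → ℝ) (hk : ∀ x, k x = ∫ ω, K ω x ∂P)
    (β : G → G → ℝ) (hβ : ∀ x y, β x y = ∫ ω, (K ω x - (if x = 0 then 1 else 0)) *
        (K ω y - (if y = 0 then 1 else 0)) ∂P)
    (g φ : G → ℝ) (a : ℝ) :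
    ∫ ω, (2 * ∑' v, (K ω v - (if v = 0 then 1 else 0)) * φ v
        + a * ∑' q : G × G, g (q.1 - q.2) *
            ((K ω q.1 - (if q.1 = 0 then 1 else 0)) * (K ω q.2 - (if q.2 = 0 then 1 else 0)))
        - 2 * (((∑' u, K ω u) - 1) * φ 0)) ∂P =
      2 * ∑' v, (k v - (if v = 0 then 1 else 0)) * φ v
        + a * ∑' q : G × G, g (q.1 - q.2) * β q.1 q.2
        - 2 * (((∑' u, k u) - 1) * φ 0) := by
  have hK_int : ∀ x, Integrable (fun ω => K ω x) P := fun x =>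
    .of_bound (hK_meas x).aestronglyMeasurable C (hK_bdd.mono fun _ h => h x)
  have hB_int : ∀ x, Integrable (fun ω => K ω x - (if x = 0 then 1 else 0)) P := fun x =>
    (hK_int x).sub (integrable_const _)
  have hBS : ∀ᵐ ω ∂P, ∀ x ∉ insert 0 S, K ω x - (if x = 0 then 1 else 0) = 0 :=
    hKS.mono fun ω h x hx => sub_ite_eq_zero_of_notMem_insert h hx
  obtain ⟨h_lin_int, h_lin⟩ := integrable_tsum_and_integral_tsum_of_ae_eq_zero (insert 0 S)
    (hBS.mono fun ω h v hv => by rw [h v hv, zero_mul]) fun v => (hB_int v).mul_const (φ v)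
  obtain ⟨h_quad_int, h_quad⟩ := integrable_tsum_and_integral_tsum_of_ae_eq_zero
    (insert 0 S ×ˢ insert 0 S) (hBS.mono fun ω h q hq => by
      rw [Finset.mem_product, not_and_or] at hq
      rcases hq with hq | hq <;> simp [h _ hq])
    fun q => (integrable_sub_ite_mul_sub_ite hK_meas hK_bdd q.1 q.2).const_mul (g (q.1 - q.2))
  obtain ⟨h_mass_int, h_mass⟩ := integrable_tsum_and_integral_tsum_of_ae_eq_zero S hKS hK_int
  rw [integral_sub (by fun_prop) (by fun_prop), integral_add (by fun_prop) (by fun_prop),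
    integral_const_mul, integral_const_mul, integral_const_mul, integral_mul_const,
    integral_sub h_mass_int (integrable_const 1), integral_const, h_lin, h_quad, h_mass]
  simp only [integral_mul_const, integral_const_mul, integral_sub (hK_int _) (integrable_const _),
    integral_const, ← hk, ← hβ, probReal_univ, smul_eq_mul, one_mul]

end Expectation

section ConvolutionPowers

variable {d : ℕ} {p : (Fin d → ℤ) → ℝ}

lemma convPow_nonneg (hp : 0 ≤ p) (m : ℕ) (x : Fin d → ℤ) : 0 ≤ convPow p m x := by
  induction m generalizing x with
  | zero => simp only [convPow]; positivity
  | succ m ih => exact tsum_nonneg fun y => mul_nonneg (ih _) (hp y)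

lemma convPow_neg (hp : ∀ x, p (-x) = p x) (m : ℕ) (x : Fin d → ℤ) :
    convPow p m (-x) = convPow p m x := by
  induction m generalizing x with
  | zero => simp only [convPow, neg_eq_zero]
  | succ m ih =>
    simp only [convPow]
    rw [← (Equiv.neg _).tsum_eq]
    refine tsum_congr fun y => ?_
    simp only [Equiv.neg_apply, hp, ← ih (x - y), neg_sub, sub_neg_eq_add, neg_add_eq_sub]

lemma hasFiniteSupport_convPow (hp : p.HasFiniteSupport) (m : ℕ) :
    (convPow p m).HasFiniteSupport := by
  induction m with
  | zero => exact hasFiniteSupport_ite_eq_zero 1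
  | succ m ih =>
    refine (Set.Finite.add ih hp).subset fun x hx => ?_
    obtain ⟨y, hy⟩ : ∃ y, convPow p m (x - y) * p y ≠ 0 := by
      by_contra! h
      exact hx (by simp only [convPow, h, tsum_zero])
    simpa using Set.add_mem_add (show x - y ∈ support (convPow p m) from left_ne_zero_of_mul hy)
      (show y ∈ support p from right_ne_zero_of_mul hy)

lemma gFn_neg (hp : ∀ x, p (-x) = p x) (n : ℕ) (x : Fin d → ℤ) : gFn p n (-x) = gFn p n x :=
  Finset.sum_congr rfl fun m _ => convPow_neg hp m x

lemma hasFiniteSupport_gFn (hp : p.HasFiniteSupport) (n : ℕ) : (gFn p n).HasFiniteSupport :=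
  HasFiniteSupport.sum (fun m => hasFiniteSupport_convPow hp m) _

lemma tsum_gFn_sub_mul (hp : p.HasFiniteSupport) (n : ℕ) (u : Fin d → ℤ) :
    ∑' v, gFn p n (u - v) * p v = gFn p n u - (if u = 0 then 1 else 0) + convPow p (n + 1) u := by
  have hsum : ∀ m, Summable fun v => convPow p m (u - v) * p v := fun m =>
    summable_of_hasFiniteSupport (hp.fun_mul_right _)
  have hshift : ∑' v, gFn p n (u - v) * p v = ∑ m ∈ Finset.range (n + 1), convPow p (m + 1) u := by
    simp only [gFn, Finset.sum_mul]
    exact Summable.tsum_finsetSum fun m _ => hsum m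
  have h := Finset.sum_range_succ' (fun m => convPow p m u) (n + 1)
  have h0 : convPow p 0 u = if u = 0 then 1 else 0 := rfl
  rw [Finset.sum_range_succ] at h
  rw [hshift, gFn]
  linarith

end ConvolutionPowers

section SymmetrizationIdentity

variable {d : ℕ}

lemma tsum_mul_crossCorr_gFn {p : (Fin d → ℤ) → ℝ} (hp : p.HasFiniteSupport)
    (h : (Fin d → ℤ) → ℝ) (n : ℕ) :
    ∑' v, p v * crossCorr (gFn p n) h v =
      crossCorr (gFn p n) h 0 - h 0 + ∑' u, convPow p (n + 1) u * h u := by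
  have hsum : ∀ f : (Fin d → ℤ) → ℝ, f.HasFiniteSupport → Summable fun u => f u * h u :=
    fun f hf => summable_of_hasFiniteSupport (hf.fun_mul_left h)
  have hδ := hasFiniteSupport_ite_eq_zero (G := Fin d → ℤ) 1
  rw [tsum_mul_crossCorr hp (hasFiniteSupport_gFn hp n)]
  simp only [tsum_gFn_sub_mul hp, add_mul, sub_mul]
  have hg := hsum _ (hasFiniteSupport_gFn hp n)
  rw [(hg.sub (hsum _ hδ)).tsum_add (hsum _ (hasFiniteSupport_convPow hp _)),
    hg.tsum_sub (hsum _ hδ)]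
  simp [crossCorr]

lemma two_tsum_mul_crossCorr_gFn_symmKernel {k : (Fin d → ℤ) → ℝ} (hk0 : 0 ≤ k)
    (hk : k.HasFiniteSupport) {h : (Fin d → ℤ) → ℝ} (h_even : ∀ x, h (-x) = h x) (n : ℕ) :
    2 * ∑' v, (k v - (if v = 0 then 1 else 0)) * crossCorr (gFn (symmKernel k) n) h v
        - 2 * (((∑' u, k u) - 1) * crossCorr (gFn (symmKernel k) n) h 0) =
      2 * ((∑' y, k y) - k 0) * ((∑' u, convPow (symmKernel k) (n + 1) u * h u) - h 0) := by
  set φ := crossCorr (gFn (symmKernel k) n) h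
  have hp := hasFiniteSupport_symmKernel hk
  have hφ_even : ∀ v, φ (-v) = φ v := crossCorr_neg (gFn_neg (symmKernel_neg k) n) h_even
  have hsum : ∀ f : (Fin d → ℤ) → ℝ, f.HasFiniteSupport → Summable fun v => f v * φ v :=
    fun f hf => summable_of_hasFiniteSupport (hf.fun_mul_left φ)
  have hk_neg : (fun v => k (-v)).HasFiniteSupport := hk.fun_comp_of_injective neg_injective
  have h_reflect : ∑' v, k (-v) * φ v = ∑' v, k v * φ v := by
    rw [← (Equiv.neg _).tsum_eq]
    simp only [Equiv.neg_apply, neg_neg, hφ_even]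
  have h_symm : 2 * ∑' v, k v * φ v =
      2 * ((∑' y, k y) - k 0) * ∑' v, symmKernel k v * φ v + 2 * k 0 * φ 0 := by
    calc 2 * ∑' v, k v * φ v = ∑' v, (k v + k (-v)) * φ v := by
          simp only [add_mul]
          rw [(hsum _ hk).tsum_add (hsum _ hk_neg), h_reflect, two_mul]
      _ = ∑' v, (2 * ((∑' y, k y) - k 0) * (symmKernel k v * φ v)
            + (if v = 0 then 2 * k 0 else 0) * φ v) := tsum_congr fun v => by
          rw [add_neg_apply_eq_symmKernel hk0 (summable_of_hasFiniteSupport hk)]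
          ring
      _ = _ := by
          rw [((hsum _ hp).mul_left _).tsum_add (hsum _ (hasFiniteSupport_ite_eq_zero _)),
            tsum_mul_left]
          simp
  have h_delta : ∑' v, (k v - (if v = 0 then 1 else 0)) * φ v = ∑' v, k v * φ v - φ 0 := by
    simp only [sub_mul]
    rw [(hsum _ hk).tsum_sub (hsum _ (hasFiniteSupport_ite_eq_zero _))]
    simp
  rw [tsum_mul_crossCorr_gFn hp] at h_symm
  rw [h_delta]
  linear_combination h_symm

lemma le_two_tsum_mul_crossCorr_gFn_symmKernel {k : (Fin d → ℤ) → ℝ} (hk0 : 0 ≤ k)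
    (hk : k.HasFiniteSupport) {h : (Fin d → ℤ) → ℝ} (h_even : ∀ x, h (-x) = h x) (h_nonneg : 0 ≤ h)
    (n : ℕ) :
    -(2 * ((∑' y, k y) - k 0) * h 0) ≤
      2 * ∑' v, (k v - (if v = 0 then 1 else 0)) * crossCorr (gFn (symmKernel k) n) h v
        - 2 * (((∑' u, k u) - 1) * crossCorr (gFn (symmKernel k) n) h 0) := by
  have hk_sum : Summable k := summable_of_hasFiniteSupport hk
  have hD : 0 ≤ (∑' y, k y) - k 0 := sub_nonneg.2 (hk_sum.le_tsum 0 fun j _ => hk0 j)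
  have h_tail : 0 ≤ ∑' u, convPow (symmKernel k) (n + 1) u * h u :=
    tsum_nonneg fun u => mul_nonneg (convPow_nonneg (symmKernel_nonneg hk0 hk_sum) _ _) (h_nonneg u)
  rw [two_tsum_mul_crossCorr_gFn_symmKernel hk0 hk h_even n]
  nlinarith [mul_nonneg hD h_tail]

end SymmetrizationIdentity

lemma abs_le_abs_of_le_mul_ite {a b : ℝ} {c : Prop} [Decidable c] (h0 : 0 ≤ a)
    (h : a ≤ b * if c then 1 else 0) : |a| ≤ |b| := by
  rw [abs_of_nonneg h0]
  exact h.trans (by split_ifs <;> simp [le_abs_self])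

lemma eq_zero_of_le_mul_ite {a b : ℝ} {c : Prop} [Decidable c] (h0 : 0 ≤ a)
    (h : a ≤ b * if c then 1 else 0) (hc : ¬c) : a = 0 := by
  rw [if_neg hc, mul_zero] at h
  exact le_antisymm h h0

lemma finite_setOf_sum_abs_le (d : ℕ) (r : ℝ) :
    {x : Fin d → ℤ | ((∑ i, |x i| : ℤ) : ℝ) ≤ r}.Finite := by
  refine (Set.finite_Icc (-fun _ => ⌈r⌉) fun _ => ⌈r⌉).subset fun x hx => ?_
  have hsum : ∑ i, |x i| ≤ ⌈r⌉ := by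
    exact_mod_cast (show ((∑ i, |x i| : ℤ) : ℝ) ≤ r from hx).trans (Int.le_ceil r)
  have hx_le : ∀ i, |x i| ≤ ⌈r⌉ := fun i =>
    (Finset.single_le_sum (fun j _ => abs_nonneg (x j)) (Finset.mem_univ i)).trans hsum
  exact ⟨fun i => neg_le_of_abs_le (hx_le i), fun i => le_of_abs_le (hx_le i)⟩

theorem stmt11_general {d : ℕ} {Ω : Type*} [MeasurableSpace Ω] (P : Measure Ω)
    [IsProbabilityMeasure P]
    (K : Ω → (Fin d → ℤ) → ℝ) (b r : ℝ)
    (hKmeas : ∀ x, Measurable fun ω => K ω x)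
    (hKbd : ∀ᵐ ω ∂P, ∀ x, 0 ≤ K ω x ∧
      K ω x ≤ b * (if ((∑ i, |x i| : ℤ) : ℝ) ≤ r then 1 else 0))
    (k : (Fin d → ℤ) → ℝ) (hk : ∀ x, k x = ∫ ω, K ω x ∂P)
    (β : (Fin d → ℤ) → (Fin d → ℤ) → ℝ)
    (hβ : ∀ x y, β x y = ∫ ω, (K ω x - (if x = 0 then 1 else 0)) *
        (K ω y - (if y = 0 then 1 else 0)) ∂P)
    (p : (Fin d → ℤ) → ℝ)
    (hp : ∀ x, p x = if x = 0 then 0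
        else (k x + k (-x)) / (2 * ((∑' y, k y) - k 0)))
    (n : ℕ)
    (ρ : (Fin d → ℤ) → ℝ) (hρ0 : ∀ x, 0 ≤ ρ x) (hρ1 : HasSum ρ 1) :
    (∑' q : (Fin d → ℤ) × (Fin d → ℤ), gFn p n (q.1 - q.2) * β q.1 q.2 -
        2 * ((∑' y, k y) - k 0)) * ∑' z, (ρ z) ^ 2 ≤
      ∫ ω, ∑' t : (Fin d → ℤ) × (Fin d → ℤ) × (Fin d → ℤ),
          gFn p n (t.1 - t.2.1) *
            (((ρ t.1 + (K ω (t.1 - t.2.2) - (if t.1 - t.2.2 = 0 then 1 else 0)) * ρ t.2.2) *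
                (ρ t.2.1 + (K ω (t.2.1 - t.2.2) - (if t.2.1 - t.2.2 = 0 then 1 else 0)) * ρ t.2.2) -
                ρ t.1 * ρ t.2.1) -
              2 * (((∑' u, K ω u) - 1) * ρ t.1 * ρ t.2.1 * ρ t.2.2)) ∂P := by
  obtain rfl : p = symmKernel k := funext hp
  set S := (finite_setOf_sum_abs_le d r).toFinset
  have hS : ∀ x, ((∑ i, |x i| : ℤ) : ℝ) ≤ r → x ∈ S := fun x hx =>
    (finite_setOf_sum_abs_le d r).mem_toFinset.2 hx
  have hK_bdd : ∀ᵐ ω ∂P, ∀ x, |K ω x| ≤ |b| :=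
    hKbd.mono fun ω h x => abs_le_abs_of_le_mul_ite (h x).1 (h x).2
  have hKS : ∀ᵐ ω ∂P, ∀ x ∉ S, K ω x = 0 :=
    hKbd.mono fun ω h x hx => eq_zero_of_le_mul_ite (h x).1 (h x).2 (mt (hS x) hx)
  have hk0 : 0 ≤ k := fun x => (hk x).symm ▸ integral_nonneg_of_ae (hKbd.mono fun ω h => (h x).1)
  have hk_fin : k.HasFiniteSupport := funext hk ▸ hasFiniteSupport_integral_of_ae_eq_zero hKS
  have hg := hasFiniteSupport_gFn (hasFiniteSupport_symmKernel hk_fin) n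
  have hpt := hKS.mono fun ω hω => tsum_triple_eq_crossCorr hg (gFn_neg (symmKernel_neg k) n)
    (hasFiniteSupport_sub_ite hω) hρ0 hρ1 (∑' u, K ω u)
  beta_reduce at hpt
  rw [integral_congr_ae hpt,
    integral_quadratic_form K |b| S hKmeas hK_bdd hKS k hk β hβ _ _ _]
  have key := le_two_tsum_mul_crossCorr_gFn_symmKernel hk0 hk_fin (crossCorr_self_neg ρ)
    (crossCorr_self_nonneg hρ0) n
  rw [crossCorr_self_zero] at key
  linarith

/-- For every `n ≥ 1` and every probability vector `ρ` on `ℤ^d`, writing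
`J_{x,z}(ξ) = ρ_x + (ξ−δ₀)_{x−z} ρ_z`, `U_{x,y,z}(ξ) = J_{x,z}(ξ)J_{y,z}(ξ) − ρ_x ρ_y`
and `W_{x,y,z}(ξ) = (|ξ|−1) ρ_x ρ_y ρ_z`, one has
`E[Σ_{x,y,z} g_n(x−y)(U_{x,y,z}(K) − 2W_{x,y,z}(K))]
  ≥ (Σ_{x,y} g_n(x−y) β_{x,y} − 2(|k|−k₀)) · Σ_z ρ_z²`. -/
theorem stmt11 {d : ℕ} {Ω : Type*} [MeasurableSpace Ω] (P : Measure Ω)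
    [IsProbabilityMeasure P]
    (K : Ω → (Fin d → ℤ) → ℝ) (b r : ℝ)
    (hKmeas : ∀ x, Measurable fun ω => K ω x)
    (hKbd : ∀ᵐ ω ∂P, ∀ x, 0 ≤ K ω x ∧
      K ω x ≤ b * (if ((∑ i, |x i| : ℤ) : ℝ) ≤ r then 1 else 0))
    (k : (Fin d → ℤ) → ℝ) (hk : ∀ x, k x = ∫ ω, K ω x ∂P)
    (β : (Fin d → ℤ) → (Fin d → ℤ) → ℝ)
    (hβ : ∀ x y, β x y = ∫ ω, (K ω x - (if x = 0 then 1 else 0)) *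
        (K ω y - (if y = 0 then 1 else 0)) ∂P)
    (hbasis : ∃ v : Fin d → (Fin d → ℤ), (∀ i, k (v i) ≠ 0) ∧
      LinearIndependent ℝ fun i => fun j => ((v i j : ℝ)))
    (p : (Fin d → ℤ) → ℝ)
    (hp : ∀ x, p x = if x = 0 then 0
        else (k x + k (-x)) / (2 * ((∑' y, k y) - k 0)))
    (n : ℕ) (hn : 1 ≤ n)
    (ρ : (Fin d → ℤ) → ℝ) (hρ0 : ∀ x, 0 ≤ ρ x) (hρ1 : HasSum ρ 1) :
    (∑' q : (Fin d → ℤ) × (Fin d → ℤ), gFn p n (q.1 - q.2) * β q.1 q.2 -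
        2 * ((∑' y, k y) - k 0)) * ∑' z, (ρ z) ^ 2 ≤
      ∫ ω, ∑' t : (Fin d → ℤ) × (Fin d → ℤ) × (Fin d → ℤ),
          gFn p n (t.1 - t.2.1) *
            (((ρ t.1 + (K ω (t.1 - t.2.2) - (if t.1 - t.2.2 = 0 then 1 else 0)) * ρ t.2.2) *
                (ρ t.2.1 + (K ω (t.2.1 - t.2.2) - (if t.2.1 - t.2.2 = 0 then 1 else 0)) * ρ t.2.2) -
                ρ t.1 * ρ t.2.1) -
              2 * (((∑' u, K ω u) - 1) * ρ t.1 * ρ t.2.1 * ρ t.2.2)) ∂P :=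
  stmt11_general P K b r hKmeas hKbd k hk β hβ p hp n ρ hρ0 hρ1
end

section
/- Let k : ℤ^d → [0,∞) be finitely supported with |k| = Σ_x k_x, let W be a bounded nonnegative random variable with E[W] = 1, set K_x = W k_x, and let β_{x,y} = E[(K−δ₀)_x (K−δ₀)_y]. Suppose G : ℤ^d → ℝ is bounded and satisfies (1/2)((k + ǩ)*G)(x) = |k| G(x) − δ_{0,x} for all x ∈ ℤ^d, where ǩ(x) = k(−x). Then Σ_{x,y∈ℤ^d} G(x−y) β_{x,y} = E[W²] · Σ_{x∈ℤ^d} (G*k)(x) k_x + 2 − (2|k| − 1) G(0). -/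
open MeasureTheory
open scoped BigOperators

/-- Computation of `Σ_{x,y} G(x−y) β_{x,y}` for the potlatch kernel `K = W k`:
if `G` is bounded and satisfies the resolvent identity
`½((k+ǩ)*G)(x) = |k| G(x) − δ_{0,x}`, then
`Σ_{x,y} G(x−y) β_{x,y} = E[W²]·⟨G*k, k⟩ + 2 − (2|k|−1) G(0)`. -/
theorem stmt14 {d : ℕ} {Ω : Type*} [MeasurableSpace Ω] (P : Measure Ω)
    [IsProbabilityMeasure P]
    (k : (Fin d → ℤ) → ℝ) (hk0 : ∀ x, 0 ≤ k x)
    (hksupp : (Function.support k).Finite)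
    (W : Ω → ℝ) (hWmeas : Measurable W) (hW0 : ∀ ω, 0 ≤ W ω)
    (hWbd : ∃ M : ℝ, ∀ ω, W ω ≤ M)
    (hW1 : ∫ ω, W ω ∂P = 1)
    (β : (Fin d → ℤ) → (Fin d → ℤ) → ℝ)
    (hβ : ∀ x y, β x y = ∫ ω, (W ω * k x - (if x = 0 then 1 else 0)) *
        (W ω * k y - (if y = 0 then 1 else 0)) ∂P)
    (G : (Fin d → ℤ) → ℝ) (hGbd : ∃ M : ℝ, ∀ x, |G x| ≤ M)
    (hGres : ∀ x, (1 / 2 : ℝ) * ∑' y, (k (x - y) + k (y - x)) * G y =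
      (∑' u, k u) * G x - (if x = 0 then 1 else 0)) :
    ∑' q : (Fin d → ℤ) × (Fin d → ℤ), G (q.1 - q.2) * β q.1 q.2 =
      (∫ ω, (W ω) ^ 2 ∂P) * (∑' x, (∑' y, G (x - y) * k y) * k x) + 2 -
        (2 * (∑' u, k u) - 1) * G 0 := by
  classical
  obtain ⟨M, hM⟩ := hWbd
  have hWint : Integrable W P := by
    refine (integrable_const M).mono' hWmeas.aestronglyMeasurable ?_
    filter_upwards with ω
    rw [Real.norm_eq_abs, abs_of_nonneg (hW0 ω)]
    exact hM ω
  have hW2int : Integrable (fun ω => W ω ^ 2) P := by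
    refine (integrable_const (M ^ 2)).mono' (hWmeas.pow_const 2).aestronglyMeasurable ?_
    filter_upwards with ω
    rw [Real.norm_eq_abs, abs_of_nonneg (by positivity)]
    exact pow_le_pow_left₀ (hW0 ω) (hM ω) 2
  set E2 : ℝ := ∫ ω, W ω ^ 2 ∂P with hE2
  set d0 : (Fin d → ℤ) → ℝ := fun x => if x = 0 then 1 else 0 with hd0
  have hd00 : d0 0 = 1 := by simp [hd0]
  have hβ' : ∀ x y, β x y = E2 * (k x * k y) - (k x * d0 y + d0 x * k y) + d0 x * d0 y := by
    intro x y
    rw [hβ]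
    have hexp : ∀ ω, (W ω * k x - (if x = 0 then 1 else 0)) *
        (W ω * k y - (if y = 0 then 1 else 0))
        = W ω ^ 2 * (k x * k y) - W ω * (k x * d0 y + d0 x * k y) + d0 x * d0 y := by
      intro ω; simp only [hd0]; ring
    simp_rw [hexp]
    have i1 : Integrable (fun ω => W ω ^ 2 * (k x * k y)
        - W ω * (k x * d0 y + d0 x * k y)) P :=
      (hW2int.mul_const _).sub (hWint.mul_const _)
    rw [integral_add i1 (integrable_const _),
      integral_sub (hW2int.mul_const _) (hWint.mul_const _),
      integral_mul_const, integral_mul_const, hW1, integral_const]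
    simp [hE2]
  -- finite support finsets
  set S : Finset (Fin d → ℤ) := hksupp.toFinset ∪ {0} with hS
  set T : Finset (Fin d → ℤ) := S ∪ S.image (fun x => -x) with hT
  have hT0 : (0 : Fin d → ℤ) ∈ T := by simp [hT, hS]
  have hTk : ∀ x, k x ≠ 0 → x ∈ T := by
    intro x hx
    simp [hT, hS, Set.Finite.mem_toFinset, Function.mem_support, hx]
  have hTneg : ∀ x, x ∈ T → -x ∈ T := by
    intro x hx
    simp only [hT, Finset.mem_union, Finset.mem_image] at hx ⊢
    rcases hx with h | ⟨y, hy, rfl⟩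
    · exact Or.inr ⟨x, h, rfl⟩
    · exact Or.inl (by simpa using hy)
  have hkT : ∀ u, u ∉ T → k u = 0 := fun u hu => by
    by_contra h; exact hu (hTk u h)
  have hd0T : ∀ u, u ∉ T → d0 u = 0 := by
    intro u hu
    simp only [hd0]
    rw [if_neg]
    rintro rfl; exact hu hT0
  have hL : (∑' u, k u) = ∑ u ∈ T, k u := tsum_eq_sum hkT
  have hinner : ∀ x, (∑' y, G (x - y) * k y) = ∑ y ∈ T, G (x - y) * k y := by
    intro x
    exact tsum_eq_sum fun y hy => by rw [hkT y hy, mul_zero]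
  have hA : (∑' x, (∑' y, G (x - y) * k y) * k x)
      = ∑ x ∈ T, (∑ y ∈ T, G (x - y) * k y) * k x := by
    simp_rw [hinner]
    exact tsum_eq_sum fun x hx => by rw [hkT x hx, mul_zero]
  have hβ0 : ∀ (x y : Fin d → ℤ), x ∉ T ∨ y ∉ T → β x y = 0 := by
    intro x y hxy
    rw [hβ']
    rcases hxy with h | h
    · rw [hkT x h, hd0T x h]; ring
    · rw [hkT y h, hd0T y h]; ring
  have hLHS : (∑' q : (Fin d → ℤ) × (Fin d → ℤ), G (q.1 - q.2) * β q.1 q.2)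
      = ∑ q ∈ T ×ˢ T, G (q.1 - q.2) * β q.1 q.2 := by
    refine tsum_eq_sum fun q hq => ?_
    rw [Finset.mem_product, not_and_or] at hq
    rw [hβ0 q.1 q.2 hq, mul_zero]
  rw [hLHS, Finset.sum_product, hL, hA]
  -- resolvent identity at 0, as a finite sum
  have hres0 := hGres 0
  rw [if_pos rfl] at hres0
  have hres0' : (∑' y, (k (0 - y) + k (y - 0)) * G y)
      = ∑ y ∈ T, (k (-y) + k y) * G y := by
    simp only [zero_sub, sub_zero]
    refine tsum_eq_sum fun y hy => ?_
    have h1 : k y = 0 := hkT y hy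
    have h2 : k (-y) = 0 := hkT _ (fun h => hy (by simpa using hTneg _ h))
    rw [h1, h2]; ring
  rw [hres0', hL] at hres0
  have hsplit : ∑ y ∈ T, (k (-y) + k y) * G y
      = (∑ y ∈ T, k (-y) * G y) + ∑ y ∈ T, k y * G y := by
    rw [← Finset.sum_add_distrib]
    exact Finset.sum_congr rfl fun y _ => by ring
  have hswap : ∑ y ∈ T, k (-y) * G y = ∑ y ∈ T, k y * G (-y) := by
    refine Finset.sum_equiv (Equiv.neg _) (fun i => ?_) (fun i _ => ?_)
    · constructor
      · exact fun h => hTneg _ h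
      · intro h; simpa using hTneg _ h
    · simp
  -- expand the double sum
  have step : ∀ x ∈ T, ∑ y ∈ T, G (x - y) * β x y
      = E2 * ((∑ y ∈ T, G (x - y) * k y) * k x)
        - G x * k x - (∑ y ∈ T, G (x - y) * k y) * d0 x + G x * d0 x := by
    intro x _
    have e0 : ∑ y ∈ T, G (x - y) * β x y
        = ∑ y ∈ T, (E2 * (G (x - y) * k y) * k x - G (x - y) * (k x * d0 y)
            - (G (x - y) * k y) * d0 x + G (x - y) * (d0 x * d0 y)) := by
      refine Finset.sum_congr rfl fun y _ => ?_
      rw [hβ' x y]; ring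
    rw [e0]
    have e1 : ∑ y ∈ T, G (x - y) * (k x * d0 y) = G x * k x := by
      rw [Finset.sum_eq_single 0]
      · simp [hd00]
      · intro y _ hy
        simp [hd0, if_neg hy]
      · intro h; exact absurd hT0 h
    have e2 : ∑ y ∈ T, G (x - y) * (d0 x * d0 y) = G x * d0 x := by
      rw [Finset.sum_eq_single 0]
      · simp [hd00]
      · intro y _ hy
        simp [hd0, if_neg hy]
      · intro h; exact absurd hT0 h
    have e3 : ∑ y ∈ T, E2 * (G (x - y) * k y) * k x
        = E2 * ((∑ y ∈ T, G (x - y) * k y) * k x) := by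
      conv_rhs => rw [Finset.sum_mul, Finset.mul_sum]
      exact Finset.sum_congr rfl fun y _ => by ring
    have e4 : ∑ y ∈ T, G (x - y) * k y * d0 x
        = (∑ y ∈ T, G (x - y) * k y) * d0 x := (Finset.sum_mul _ _ _).symm
    simp only [Finset.sum_add_distrib, Finset.sum_sub_distrib]
    rw [e1, e2, e3, e4]
  rw [Finset.sum_congr rfl step]
  simp only [Finset.sum_add_distrib, Finset.sum_sub_distrib, ← Finset.mul_sum]
  have f1 : ∑ x ∈ T, (∑ y ∈ T, G (x - y) * k y) * d0 x
      = ∑ y ∈ T, G (-y) * k y := by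
    rw [Finset.sum_eq_single 0]
    · rw [hd00, mul_one]
      exact Finset.sum_congr rfl fun y _ => by rw [zero_sub]
    · intro x _ hx
      simp [hd0, if_neg hx]
    · intro h; exact absurd hT0 h
  have f2 : ∑ x ∈ T, G x * d0 x = G 0 := by
    rw [Finset.sum_eq_single 0]
    · rw [hd00, mul_one]
    · intro x _ hx
      simp [hd0, if_neg hx]
    · intro h; exact absurd hT0 h
  rw [f1, f2]
  have g1 : ∑ y ∈ T, G (-y) * k y = ∑ y ∈ T, k y * G (-y) :=
    Finset.sum_congr rfl fun y _ => by ring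
  have g2 : ∑ x ∈ T, G x * k x = ∑ y ∈ T, k y * G y :=
    Finset.sum_congr rfl fun y _ => by ring
  rw [g1, g2, ← hswap]
  rw [hsplit] at hres0
  linarith [hres0]
end
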